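/- The rewrite system MBR is type-sound for extended system F w.r.t. the type assignment Δ: for every rule L ↦ R ∈ MBR with FV(L) = x⃗ and every closed type ρ, Δ ⊢_F λx⃗.L : ρ implies Δ ⊢_F λx⃗.R : ρ. -/

import Mathlib

open scoped Classical

namespace SNPaper

/-! ### Untyped lambda terms with constructors and constants -/

inductive Tm (CO : Type) (arity : CO → ℕ) (C : Type) : Type where
  | var : ℕ → Tm CO arity C
  | con : (co : CO) → (Fin (arity co) → Tm CO arity C) → Tm CO arity C
  | cst : C → Tm CO arity C
  | lam : ℕ → Tm CO arity C → Tm CO arity C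
  | app : Tm CO arity C → Tm CO arity C → Tm CO arity C

variable {CO : Type} {arity : CO → ℕ} {C C' : Type}

/-- Free variables of a term. -/
def FV : Tm CO arity C → Finset ℕ
  | .var x => {x}
  | .con _ f => Finset.univ.biUnion fun i => FV (f i)
  | .cst _ => ∅
  | .lam y M => FV M \ {y}
  | .app M N => FV M ∪ FV N

/-- A variable fresh for the finite set `s`. -/
def freshVar (s : Finset ℕ) : ℕ := (s.sup id) + 1

/-- Capture-avoiding simultaneous substitution (bound variables are renamed
to fresh ones, avoiding capture). -/
def subst : Tm CO arity C → (ℕ → Tm CO arity C) → Tm CO arity C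
  | .var x, σ => σ x
  | .con co f, σ => .con co fun i => subst (f i) σ
  | .cst c, _ => .cst c
  | .app M N, σ => .app (subst M σ) (subst N σ)
  | .lam y M, σ =>
      let z := freshVar ((FV M \ {y}).biUnion fun x => FV (σ x))
      .lam z (subst M (Function.update σ y (.var z)))

/-- Capture-avoiding substitution `M[N/x]` of a single variable. -/
def subst1 (M : Tm CO arity C) (x : ℕ) (N : Tm CO arity C) : Tm CO arity C :=
  subst M fun y => if y = x then N else .var y

/-- `Mθ`: replace every constant `c` by `θ c`. -/
def mapConst (θ : C → C') : Tm CO arity C → Tm CO arity C'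
  | .var x => .var x
  | .con co f => .con co fun i => mapConst θ (f i)
  | .cst c => .cst (θ c)
  | .lam y M => .lam y (mapConst θ M)
  | .app M N => .app (mapConst θ M) (mapConst θ N)

/-- The set of constants occurring in a term. -/
def consts : Tm CO arity C → Set C
  | .var _ => ∅
  | .con _ f => ⋃ i, consts (f i)
  | .cst c => {c}
  | .lam _ M => consts M
  | .app M N => consts M ∪ consts N

/-- Iterated application `h M₁ … M_n`. -/
def appList (h : Tm CO arity C) (l : List (Tm CO arity C)) : Tm CO arity C :=
  l.foldl .app h

/-- Iterated abstraction `λx₁…x_n. M`. -/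
def lamList (xs : List ℕ) (M : Tm CO arity C) : Tm CO arity C :=
  xs.foldr .lam M

/-! ### Constructor patterns -/

inductive Pat (CO : Type) (arity : CO → ℕ) : Type where
  | pvar : ℕ → Pat CO arity
  | pcon : (co : CO) → (Fin (arity co) → Pat CO arity) → Pat CO arity

def Pat.toTm : Pat CO arity → Tm CO arity C
  | .pvar x => .var x
  | .pcon co qs => .con co fun i => (qs i).toTm

/-- Instantiate a pattern by a substitution (patterns contain no binders,
so this is plain structural substitution). -/
def Pat.substT (σ : ℕ → Tm CO arity C) : Pat CO arity → Tm CO arity C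
  | .pvar x => σ x
  | .pcon co qs => .con co fun i => (qs i).substT σ

def Pat.psubst (σ : ℕ → Pat CO arity) : Pat CO arity → Pat CO arity
  | .pvar x => σ x
  | .pcon co qs => .pcon co fun i => (qs i).psubst σ

/-- Number of occurrences of the variable `x` in a pattern. -/
def Pat.varCount (x : ℕ) : Pat CO arity → ℕ
  | .pvar y => if y = x then 1 else 0
  | .pcon _ qs => ∑ i, (qs i).varCount x

def Pat.vars : Pat CO arity → Finset ℕ
  | .pvar x => {x}
  | .pcon _ qs => Finset.univ.biUnion fun i => (qs i).vars

/-- The patterns in the list are linear and mutually variable disjoint: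
no variable occurs twice in the whole vector. -/
def PatsLinearDisjoint (Ps : List (Pat CO arity)) : Prop :=
  ∀ x : ℕ, (Ps.map (Pat.varCount x)).sum ≤ 1

/-- Two vectors of patterns are unifiable if they have a common instance. -/
def Unifiable (Ps Qs : List (Pat CO arity)) : Prop :=
  ∃ σ τ : ℕ → Pat CO arity, Ps.map (Pat.psubst σ) = Qs.map (Pat.psubst τ)

/-! ### Rewrite systems -/

/-- A rewrite rule `c P₁ … P_n ↦ R`. -/
structure Rule (CO : Type) (arity : CO → ℕ) (C : Type) where
  head : C
  pats : List (Pat CO arity)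
  rhs : Tm CO arity C

/-- The left hand side `c P₁ … P_n` of a rule, as a term. -/
def lhsTm (r : Rule CO arity C) : Tm CO arity C :=
  appList (.cst r.head) (r.pats.map Pat.toTm)

/-- Well-formedness of a rewrite system: patterns of each rule are linear and
mutually variable disjoint, free variables of the right hand side occur in the
left hand side, all rules for one constant have the same arity, and left hand
sides of different rules are non-unifiable. -/
structure WfRS (R : Set (Rule CO arity C)) : Prop where
  linear : ∀ r ∈ R, PatsLinearDisjoint r.pats
  fv_sub : ∀ r ∈ R, ∀ x ∈ FV r.rhs, ∃ P ∈ r.pats, x ∈ P.vars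
  arity_consistent : ∀ r ∈ R, ∀ r' ∈ R, r.head = r'.head → r.pats.length = r'.pats.length
  non_unifiable : ∀ r ∈ R, ∀ r' ∈ R, r.head = r'.head → r ≠ r' →
    ¬ Unifiable r.pats r'.pats

/-- One-step reduction `M →_R N`: contraction of a β-redex or of an instance of
a rewrite rule, in an arbitrary subterm position. -/
inductive Step (R : Set (Rule CO arity C)) : Tm CO arity C → Tm CO arity C → Prop where
  | beta (x : ℕ) (M N : Tm CO arity C) :
      Step R (.app (.lam x M) N) (subst1 M x N)
  | rule (r : Rule CO arity C) (hr : r ∈ R) (σ : ℕ → Tm CO arity C) :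
      Step R (appList (.cst r.head) (r.pats.map (Pat.substT σ))) (subst r.rhs σ)
  | appL {M M' N : Tm CO arity C} : Step R M M' → Step R (.app M N) (.app M' N)
  | appR {M N N' : Tm CO arity C} : Step R N N' → Step R (.app M N) (.app M N')
  | lamC {M M' : Tm CO arity C} (x : ℕ) : Step R M M' → Step R (.lam x M) (.lam x M')
  | conC {co : CO} {f : Fin (arity co) → Tm CO arity C} (i : Fin (arity co))
      {M' : Tm CO arity C} : Step R (f i) M' →
      Step R (.con co f) (.con co (Function.update f i M'))

/-- Strong normalisation: every reduction sequence from `M` terminates,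
expressed via accessibility (the inductive characterisation). -/
def SN (R : Set (Rule CO arity C)) (M : Tm CO arity C) : Prop :=
  Acc (fun N M => Step R M N) M

/-- A constant is stratified w.r.t. `R` if all right hand sides of its rules
contain only stratified constants. -/
inductive Stratified (R : Set (Rule CO arity C)) : C → Prop where
  | intro (c : C) :
      (∀ r ∈ R, r.head = c → ∀ c' ∈ consts r.rhs, Stratified R c') →
      Stratified R c

/-! ### Stratified approximations -/

/-- `M_n`: replace every constant `c` of `M` by its `n`-th variant `c_n`
(we realize `C_ω` as `C × ℕ`). -/
def stratTm (n : ℕ) (M : Tm CO arity C) : Tm CO arity (C × ℕ) :=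
  mapConst (fun c => (c, n)) M

/-- The stratified rewrite system `R_ω = {c_{n+1} P⃗ ↦ R_n | c P⃗ ↦ R ∈ R}`. -/
def Romega (R : Set (Rule CO arity C)) : Set (Rule CO arity (C × ℕ)) :=
  {r' | ∃ r ∈ R, ∃ n : ℕ, r' = ⟨(r.head, n + 1), r.pats, stratTm n r.rhs⟩}

/-! ### The strict domain-theoretic model -/

open OmegaCompletePartialOrder in
/-- A model of the recursive domain equation
`D = Σ_{co} D^{arity co} + (D → D)` : a Scott domain (here: an ω-cpo with
least element) together with continuous operations `abst`, `ap`, `con`,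
projections and `case`, satisfying the usual equations. -/
structure DomModel (CO : Type) (arity : CO → ℕ) (D : Type)
    [OmegaCompletePartialOrder D] [OrderBot D] : Type where
  abst : (D → D) → D
  ap : D → D → D
  con : (co : CO) → (Fin (arity co) → D) → D
  proj : (co : CO) → Fin (arity co) → D → D
  case : D → Option (CO ⊕ Unit)
  case_con : ∀ co as, case (con co as) = some (Sum.inl co)
  case_abst : ∀ f, case (abst f) = some (Sum.inr ())
  case_bot : case ⊥ = none
  proj_con : ∀ co as i, proj co i (con co as) = as i
  ap_abst : ∀ f b, ap (abst f) b = f b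
  abst_cont : ωScottContinuous abst
  ap_cont : ωScottContinuous fun p : D × D => ap p.1 p.2
  con_cont : ∀ co, ωScottContinuous (con co)
  proj_cont : ∀ co i, ωScottContinuous (proj co i)

variable {D : Type} [OmegaCompletePartialOrder D] [OrderBot D]

/-- Strict version of `abst`. -/
noncomputable def strAbst (Dm : DomModel CO arity D) (f : D → D) : D :=
  if f = fun _ => (⊥ : D) then ⊥ else Dm.abst f

/-- Strict version of `ap`. -/
noncomputable def strAp (Dm : DomModel CO arity D) (a b : D) : D :=
  if a = ⊥ ∨ b = ⊥ then ⊥ else Dm.ap a b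

/-- Strict version of a constructor. -/
noncomputable def strCon (Dm : DomModel CO arity D) (co : CO)
    (as : Fin (arity co) → D) : D :=
  if ∃ i, as i = ⊥ then ⊥ else Dm.con co as

/-- The strict denotational semantics `⟦M⟧_α η`. -/
noncomputable def sem (Dm : DomModel CO arity D) :
    Tm CO arity C → (C → D) → (ℕ → D) → D
  | .var x, _, η => η x
  | .cst c, α, _ => α c
  | .con co f, α, η => strCon Dm co fun i => sem Dm (f i) α η
  | .lam y M, α, η => strAbst Dm fun a => sem Dm M α (Function.update η y a)
  | .app M N, α, η => strAp Dm (sem Dm M α η) (sem Dm N α η)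

/-! ### The pattern inverse `P⃗⁻¹` -/

/-- Combine the results of matching the components of a pattern vector,
left to right: the leftmost non-successful result wins; on success the
(variable-disjoint) partial environments are merged. -/
noncomputable def combineList :
    List (Option (Option (ℕ → Option D))) → Option (Option (ℕ → Option D))
  | [] => some (some fun _ => none)
  | r :: rs =>
    match r with
    | some (some η) =>
      match combineList rs with
      | some (some η') => some (some fun x => (η x).orElse fun _ => η' x)
      | other => other
    | bad => bad

/-- Match a single pattern against a domain element, producing `⊥` (`none`),
`Nothing` (`some none`) or `Just` a partial environment. -/
noncomputable def pmatch (Dm : DomModel CO arity D) :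
    Pat CO arity → D → Option (Option (ℕ → Option D))
  | .pvar x, a => some (some fun y => if y = x then some a else none)
  | .pcon co qs, b =>
    match Dm.case b with
    | none => none
    | some (Sum.inr _) => some none
    | some (Sum.inl co') =>
      if h : co' = co then
        combineList (List.ofFn fun i => pmatch Dm (qs i) (Dm.proj co i b))
      else some none

/-- The inverse `P⃗⁻¹ : D^k → Maybe (D^Var)` of a vector of mutually variable
disjoint constructor patterns (`none` = ⊥, `some none` = Nothing,
`some (some η)` = Just η, where `η` is `⊥` outside the pattern variables). -/
noncomputable def pinv (Dm : DomModel CO arity D) (Ps : List (Pat CO arity))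
    (as : List D) : Option (Option (ℕ → D)) :=
  (combineList (List.zipWith (pmatch Dm) Ps as)).map
    (Option.map fun η x => (η x).getD ⊥)

/-! ### The constant assignment `α_R` -/

/-- The arity (number of argument patterns) of a constant in `R`. -/
noncomputable def carity (R : Set (Rule CO arity C)) (c : C) : ℕ :=
  if h : ∃ r, r ∈ R ∧ r.head = c then h.choose.pats.length else 0

/-- `abstN k f` is `abst(λa₁. abst(λa₂. … abst(λa_k. f [a₁,…,a_k])…))`. -/
noncomputable def abstN (Dm : DomModel CO arity D) : ℕ → (List D → D) → D
  | 0, f => f []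
  | k + 1, f => Dm.abst fun a => abstN Dm k fun as => f (a :: as)

/-- The value of constant `c` on arguments `as`, by pattern matching on the
rules of `R`: the matching rule's right hand side if one matches, `dummy` on
definite mismatch of all rules, and `⊥` otherwise. -/
noncomputable def ruleVal (Dm : DomModel CO arity D) (R : Set (Rule CO arity C))
    (dummy : D) (α : C → D) (c : C) (as : List D) : D :=
  if h : ∃ r, r ∈ R ∧ r.head = c ∧ ∃ η : ℕ → D, pinv Dm r.pats as = some (some η) then
    sem Dm h.choose.rhs α h.choose_spec.2.2.choose
  else if ∀ r ∈ R, r.head = c → pinv Dm r.pats as = some none then dummy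
  else ⊥

/-- The operator `Γ_R` on constant assignments whose least fixed point is `α_R`. -/
noncomputable def Gamma (Dm : DomModel CO arity D) (R : Set (Rule CO arity C))
    (dummy : D) (α : C → D) : C → D :=
  fun c =>
    if ∃ r, r ∈ R ∧ r.head = c then
      abstN Dm (carity R c) (ruleVal Dm R dummy α c)
    else ⊥

/-- `a` is the least fixed point of `f`. -/
def IsLeastFixedPoint {α : Type*} [Preorder α] (f : α → α) (a : α) : Prop :=
  f a = a ∧ ∀ b, f b = b → a ≤ b

end SNPaper
namespace SNPaper

/-! ### Extended system F -/

/-- The constructors `T, F, 0, S, nil, cons`. -/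
inductive FCO : Type where
  | tt | ff | zero | succ | nil | cons
  deriving DecidableEq

/-- Their arities. -/
def fArity : FCO → ℕ
  | .tt => 0
  | .ff => 0
  | .zero => 0
  | .succ => 1
  | .nil => 0
  | .cons => 2

/-- Types of extended system F: type variables, `boole`, `nat`, lists `ρ*`,
arrow types and `∀p.ρ`. -/
inductive FTy : Type where
  | tvar : ℕ → FTy
  | boole : FTy
  | nat : FTy
  | list : FTy → FTy
  | arr : FTy → FTy → FTy
  | all : ℕ → FTy → FTy

/-- Free type variables. -/
def ftv : FTy → Finset ℕ
  | .tvar p => {p}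
  | .boole => ∅
  | .nat => ∅
  | .list ρ => ftv ρ
  | .arr ρ σ => ftv ρ ∪ ftv σ
  | .all p ρ => ftv ρ \ {p}

/-- A type is closed if it has no free type variables. -/
def FTy.Closed (ρ : FTy) : Prop := ftv ρ = ∅

/-- Capture-avoiding simultaneous substitution on types. -/
def tsubst : FTy → (ℕ → FTy) → FTy
  | .tvar p, σ => σ p
  | .boole, _ => .boole
  | .nat, _ => .nat
  | .list ρ, σ => .list (tsubst ρ σ)
  | .arr ρ τ, σ => .arr (tsubst ρ σ) (tsubst τ σ)
  | .all p ρ, σ =>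
      let z := freshVar ((ftv ρ \ {p}).biUnion fun q => ftv (σ q))
      .all z (tsubst ρ (Function.update σ p (.tvar z)))

/-- Capture-avoiding substitution `ρ[τ/p]` of a single type variable. -/
def tsubst1 (ρ : FTy) (p : ℕ) (τ : FTy) : FTy :=
  tsubst ρ fun q => if q = p then τ else .tvar q

section FTerms

variable {C : Type}

/-- The constructor terms. -/
def tmT : Tm FCO fArity C := .con .tt ![]
def tmF : Tm FCO fArity C := .con .ff ![]
def tmZero : Tm FCO fArity C := .con .zero ![]
def tmSucc (M : Tm FCO fArity C) : Tm FCO fArity C := .con .succ ![M]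
def tmNil : Tm FCO fArity C := .con .nil ![]
def tmCons (M N : Tm FCO fArity C) : Tm FCO fArity C := .con .cons ![M, N]

end FTerms

/-- Object variable contexts. -/
def Ctx : Type := ℕ → Option FTy

/-- The empty context. -/
def emptyCtx : Ctx := fun _ => none

/-- The typing judgements `Δ, Γ ⊢_C M : ρ` of extended system F
(Curry style, with the constructor rules). -/
inductive FTyd {C : Type} (Δ : C → FTy) : Ctx → Tm FCO fArity C → FTy → Prop where
  | var {Γ : Ctx} {x : ℕ} {ρ : FTy} : Γ x = some ρ → FTyd Δ Γ (.var x) ρ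
  | cst {Γ : Ctx} (c : C) : FTyd Δ Γ (.cst c) (Δ c)
  | lam {Γ : Ctx} {x : ℕ} {M : Tm FCO fArity C} {ρ σ : FTy} :
      FTyd Δ (fun y => if y = x then some ρ else Γ y) M σ →
      FTyd Δ Γ (.lam x M) (.arr ρ σ)
  | app {Γ : Ctx} {M N : Tm FCO fArity C} {ρ σ : FTy} :
      FTyd Δ Γ M (.arr ρ σ) → FTyd Δ Γ N ρ → FTyd Δ Γ (.app M N) σ
  | allI {Γ : Ctx} {M : Tm FCO fArity C} {ρ : FTy} {p : ℕ} :
      FTyd Δ Γ M ρ → (∀ x σ, Γ x = some σ → p ∉ ftv σ) →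
      FTyd Δ Γ M (.all p ρ)
  | allE {Γ : Ctx} {M : Tm FCO fArity C} {ρ : FTy} {p : ℕ} (σ : FTy) :
      FTyd Δ Γ M (.all p ρ) → FTyd Δ Γ M (tsubst1 ρ p σ)
  | tt {Γ : Ctx} : FTyd Δ Γ tmT .boole
  | ff {Γ : Ctx} : FTyd Δ Γ tmF .boole
  | zero {Γ : Ctx} : FTyd Δ Γ tmZero .nat
  | succ {Γ : Ctx} {M : Tm FCO fArity C} : FTyd Δ Γ M .nat → FTyd Δ Γ (tmSucc M) .nat
  | nil {Γ : Ctx} {ρ : FTy} : FTyd Δ Γ tmNil (.list ρ)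
  | cons {Γ : Ctx} {M N : Tm FCO fArity C} {ρ : FTy} :
      FTyd Δ Γ M ρ → FTyd Δ Γ N (.list ρ) → FTyd Δ Γ (tmCons M N) (.list ρ)

/-- Type-soundness of a rewrite system w.r.t. the type system `(T₀, ⊢_F)`:
for every rule `L ↦ R` with `FV L = x⃗` and every closed type `ρ`,
`Δ ⊢_F λx⃗.L : ρ` implies `Δ ⊢_F λx⃗.R : ρ`. -/
def FTypeSound {C : Type} (R : Set (Rule FCO fArity C)) (Δ : C → FTy) : Prop :=
  ∀ r ∈ R, ∀ xs : List ℕ, xs.Nodup → xs.toFinset = FV (lhsTm r) →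
    ∀ ρ : FTy, ρ.Closed →
      FTyd Δ emptyCtx (lamList xs (lhsTm r)) ρ →
      FTyd Δ emptyCtx (lamList xs r.rhs) ρ

/-! ### The candidate semantics of types -/

section FSem

variable {D : Type} [OmegaCompletePartialOrder D] [OrderBot D]

/-- Denotations of the constructors. -/
def dT (Dm : DomModel FCO fArity D) : D := Dm.con .tt ![]
def dF (Dm : DomModel FCO fArity D) : D := Dm.con .ff ![]
def dZero (Dm : DomModel FCO fArity D) : D := Dm.con .zero ![]
def dSucc (Dm : DomModel FCO fArity D) (a : D) : D := Dm.con .succ ![a]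
def dNil (Dm : DomModel FCO fArity D) : D := Dm.con .nil ![]
def dCons (Dm : DomModel FCO fArity D) (a d : D) : D := Dm.con .cons ![a, d]

/-- `Ñ`: the least subset of `D` containing `{0} ∪ abst(D)` and closed
under the constructor `S`. -/
inductive NSet (Dm : DomModel FCO fArity D) : D → Prop where
  | zero : NSet Dm (dZero Dm)
  | ab (f : D → D) : NSet Dm (Dm.abst f)
  | succ {d : D} : NSet Dm d → NSet Dm (dSucc Dm d)

/-- `L(A)`: the least subset of `D` containing `{nil} ∪ abst(D)` and
containing `cons(a,d)` for `a ∈ A` and `d ∈ L(A)`. -/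
inductive LSet (Dm : DomModel FCO fArity D) (A : Set D) : D → Prop where
  | nil : LSet Dm A (dNil Dm)
  | ab (f : D → D) : LSet Dm A (Dm.abst f)
  | cons {a d : D} : a ∈ A → LSet Dm A d → LSet Dm A (dCons Dm a d)

/-- `B̃ = {T, F} ∪ abst(D)`. -/
def BSet (Dm : DomModel FCO fArity D) : Set D :=
  {dT Dm, dF Dm} ∪ Set.range Dm.abst

/-- `A → B = { abst f | ∀ a ∈ A, f a ∈ B }`. -/
def arrSet (Dm : DomModel FCO fArity D) (A B : Set D) : Set D :=
  {x | ∃ f : D → D, x = Dm.abst f ∧ ∀ a ∈ A, f a ∈ B}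

/-- The candidates: subsets of `D` containing `dummy` and avoiding `⊥`. -/
def Cand (dummy : D) : Set (Set D) :=
  {A : Set D | dummy ∈ A ∧ (⊥ : D) ∉ A}

/-- The candidate semantics `⟦ρ⟧_τ` of types. -/
def tySem (Dm : DomModel FCO fArity D) (dummy : D) : FTy → (ℕ → Set D) → Set D
  | .tvar p, τ => τ p
  | .boole, _ => BSet Dm
  | .nat, _ => {d | NSet Dm d}
  | .list ρ, τ => {d | LSet Dm (tySem Dm dummy ρ τ) d}
  | .arr ρ σ, τ => arrSet Dm (tySem Dm dummy ρ τ) (tySem Dm dummy σ τ)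
  | .all p ρ, τ => ⋂ A ∈ Cand dummy, tySem Dm dummy ρ (Function.update τ p A)

end FSem

/-! ### The rewrite system MBR -/

/-- The constants of MBR: `if`, `<`, `lh`, `get`, `++` (cat), Gödel primitive
recursion `rec`, and the modified bar recursion constants `Φ` (phi) and
`Ψ` (psi). -/
inductive MC : Type where
  | cif | clt | clh | cget | cat | crec | cphi | cpsi
  deriving DecidableEq

/-- Pattern abbreviations. -/
def pT : Pat FCO fArity := .pcon .tt ![]
def pF : Pat FCO fArity := .pcon .ff ![]
def pZero : Pat FCO fArity := .pcon .zero ![]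
def pSucc (P : Pat FCO fArity) : Pat FCO fArity := .pcon .succ ![P]
def pNil : Pat FCO fArity := .pcon .nil ![]
def pCons (P Q : Pat FCO fArity) : Pat FCO fArity := .pcon .cons ![P, Q]

def app2 {C : Type} (h M N : Tm FCO fArity C) : Tm FCO fArity C :=
  .app (.app h M) N
def app3 {C : Type} (h M N K : Tm FCO fArity C) : Tm FCO fArity C :=
  .app (app2 h M N) K

/-- The rules of MBR.  Variables: in the `Φ`/`Ψ` rules, `0,1,2,3,4` stand for
`y, g, s, k, x` respectively. -/
def mbrList : List (Rule FCO fArity MC) :=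
  [ -- if T x y ↦ x ; if F x y ↦ y
    ⟨.cif, [pT, .pvar 0, .pvar 1], .var 0⟩,
    ⟨.cif, [pF, .pvar 0, .pvar 1], .var 1⟩,
    -- n < 0 ↦ F ; 0 < S m ↦ T ; S n < S m ↦ n < m
    ⟨.clt, [.pvar 0, pZero], tmF⟩,
    ⟨.clt, [pZero, pSucc (.pvar 0)], tmT⟩,
    ⟨.clt, [pSucc (.pvar 0), pSucc (.pvar 1)], app2 (.cst .clt) (.var 0) (.var 1)⟩,
    -- lh nil ↦ 0 ; lh (cons x s) ↦ S (lh s)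
    ⟨.clh, [pNil], tmZero⟩,
    ⟨.clh, [pCons (.pvar 0) (.pvar 1)], tmSucc (.app (.cst .clh) (.var 1))⟩,
    -- get (cons x s) 0 ↦ x ; get (cons x s) (S n) ↦ get s n
    ⟨.cget, [pCons (.pvar 0) (.pvar 1), pZero], .var 0⟩,
    ⟨.cget, [pCons (.pvar 0) (.pvar 1), pSucc (.pvar 2)],
      app2 (.cst .cget) (.var 1) (.var 2)⟩,
    -- nil ++ t ↦ t ; cons x s ++ t ↦ cons x (s ++ t)
    ⟨.cat, [pNil, .pvar 0], .var 0⟩,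
    ⟨.cat, [pCons (.pvar 0) (.pvar 1), .pvar 2],
      tmCons (.var 0) (app2 (.cst .cat) (.var 1) (.var 2))⟩,
    -- rec x f 0 ↦ x ; rec x f (S n) ↦ f n (rec x f n)   (Gödel primitive recursion)
    ⟨.crec, [.pvar 0, .pvar 1, pZero], .var 0⟩,
    ⟨.crec, [.pvar 0, .pvar 1, pSucc (.pvar 2)],
      app2 (.var 1) (.var 2) (app3 (.cst .crec) (.var 0) (.var 1) (.var 2))⟩,
    -- Φ y g s ↦ y (λk. Ψ y g s k (k < lh s))
    ⟨.cphi, [.pvar 0, .pvar 1, .pvar 2],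
      .app (.var 0) (.lam 3 (app2 (app3 (.cst .cpsi) (.var 0) (.var 1) (.var 2))
        (.var 3) (app2 (.cst .clt) (.var 3) (.app (.cst .clh) (.var 2)))))⟩,
    -- Ψ y g s k T ↦ get s k
    ⟨.cpsi, [.pvar 0, .pvar 1, .pvar 2, .pvar 3, pT],
      app2 (.cst .cget) (.var 2) (.var 3)⟩,
    -- Ψ y g s k F ↦ g k (λx. Φ y g (s ++ cons(x, nil)))
    ⟨.cpsi, [.pvar 0, .pvar 1, .pvar 2, .pvar 3, pF],
      app2 (.var 1) (.var 3)
        (.lam 4 (app3 (.cst .cphi) (.var 0) (.var 1)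
          (app2 (.cst .cat) (.var 2) (tmCons (.var 4) tmNil))))⟩ ]

/-- The rewrite system MBR (as a set of rules). -/
def MBR : Set (Rule FCO fArity MC) := {r | r ∈ mbrList}

/-- The type assignment `Δ` for the constants of MBR. -/
def ΔMBR : MC → FTy
  | .cif => .all 0 (.arr .boole (.arr (.tvar 0) (.arr (.tvar 0) (.tvar 0))))
  | .clt => .arr .nat (.arr .nat .boole)
  | .clh => .all 0 (.arr (.list (.tvar 0)) .nat)
  | .cget => .all 0 (.arr (.list (.tvar 0)) (.arr .nat (.tvar 0)))
  | .cat => .all 0 (.arr (.list (.tvar 0)) (.arr (.list (.tvar 0)) (.list (.tvar 0))))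
  | .crec => .all 0 (.arr (.tvar 0)
      (.arr (.arr .nat (.arr (.tvar 0) (.tvar 0))) (.arr .nat (.tvar 0))))
  | .cphi => .all 0 (.arr (.arr (.arr .nat (.tvar 0)) .nat)
      (.arr (.arr .nat (.arr (.arr (.tvar 0) .nat) (.tvar 0)))
        (.arr (.list (.tvar 0)) .nat)))
  | .cpsi => .all 0 (.arr (.arr (.arr .nat (.tvar 0)) .nat)
      (.arr (.arr .nat (.arr (.arr (.tvar 0) .nat) (.tvar 0)))
        (.arr (.list (.tvar 0)) (.arr .nat (.arr .boole (.tvar 0))))))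

end SNPaper
namespace SNPaper

/-!
A typing in Curry-style system F is a syntax-directed typing followed by generalization and
instantiation steps, which do not change the term. For a left-hand side `c M₁ … Mₙ` with
`Δ c = ∀p. A₁ → … → Aₙ → R`, follow the spine: every type of `c M₁ … Mⱼ` is, up to renaming
of bound variables, a generalization of an instance `(Aⱼ₊₁ → … → R)θ`, and each `Mᵢ` has the
same generalization of `Aᵢθ`. As soon as an arrow type is reached nothing is generalized, so
`Mᵢ : Aᵢθ` exactly and the right-hand side can be typed at `Rθ` from these typings; constructor
patterns are inverted in the same way. The binders in the right-hand sides of the `Φ` and `Ψ`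
rules need weakening, which also holds only up to renaming of generalized variables. Throughout,
alpha-equivalent types are harmless because they have literally the same instances.
-/

open Function

theorem lt_freshVar {s : Finset ℕ} {x : ℕ} (hx : x ∈ s) : x < freshVar s :=
  Nat.lt_succ_of_le (Finset.le_sup (f := id) hx)

theorem freshVar_notMem (s : Finset ℕ) : freshVar s ∉ s :=
  fun h => (lt_freshVar h).false

theorem ftv_tsubst (ρ : FTy) (σ : ℕ → FTy) :
    ftv (tsubst ρ σ) = (ftv ρ).biUnion fun v => ftv (σ v) := by
  induction ρ generalizing σ with
  | tvar p => simp [tsubst, ftv]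
  | boole | nat => simp [tsubst, ftv]
  | list ρ ih => simpa [tsubst, ftv] using ih σ
  | arr ρ τ ih₁ ih₂ => simp only [tsubst, ftv, ih₁, ih₂, Finset.union_biUnion]
  | all p ρ ih =>
    simp only [tsubst, ftv, ih]
    have hz := freshVar_notMem ((ftv ρ \ {p}).biUnion fun v => ftv (σ v))
    ext n
    simp only [Finset.mem_sdiff, Finset.mem_biUnion, Finset.mem_singleton] at hz ⊢
    constructor
    · rintro ⟨⟨v, hv, hn⟩, hnz⟩
      by_cases hvp : v = p
      · subst hvp
        simp only [update_self, ftv, Finset.mem_singleton] at hn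
        exact absurd hn hnz
      · exact ⟨v, ⟨hv, hvp⟩, by rwa [update_of_ne hvp] at hn⟩
    · rintro ⟨v, ⟨hv, hvp⟩, hn⟩
      exact ⟨⟨v, hv, by rwa [update_of_ne hvp]⟩, fun h => hz ⟨v, ⟨hv, hvp⟩, h ▸ hn⟩⟩

theorem tsubst_congr {ρ : FTy} {σ σ' : ℕ → FTy} (h : ∀ v ∈ ftv ρ, σ v = σ' v) :
    tsubst ρ σ = tsubst ρ σ' := by
  induction ρ generalizing σ σ' with
  | tvar p => simpa [tsubst, ftv] using h
  | boole | nat => rfl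
  | list ρ ih => simp only [tsubst, ih (by simpa [ftv] using h)]
  | arr ρ τ ih₁ ih₂ =>
    simp only [ftv, Finset.mem_union] at h
    simp only [tsubst, ih₁ fun v hv => h v (.inl hv), ih₂ fun v hv => h v (.inr hv)]
  | all p ρ ih =>
    simp only [ftv, Finset.mem_sdiff, Finset.mem_singleton] at h
    have hset : ((ftv ρ \ {p}).biUnion fun v => ftv (σ v)) =
        (ftv ρ \ {p}).biUnion fun v => ftv (σ' v) :=
      Finset.biUnion_congr rfl fun v hv => by rw [h v (by simpa using hv)]
    simp only [tsubst, hset]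
    congr 1
    refine ih fun v hv => ?_
    by_cases hvp : v = p
    · subst hvp; simp
    · simp [update_of_ne hvp, h v ⟨hv, hvp⟩]

/-- The `∀` case of `tsubst_tsubst`, with the induction hypothesis as the assumption `hcomp`;
it is also the key to renaming bound variables (`AlphaEq.all_update`). -/
theorem tsubst_all_update_of {X : FTy} {ζ κ : ℕ → FTy} {q z : ℕ}
    (hz : ∀ v ∈ ftv X, v ≠ q → z ∉ ftv (ζ v))
    (hcomp : ∀ κ', tsubst (tsubst X (update ζ q (.tvar z))) κ' =
      tsubst X fun v => tsubst (update ζ q (.tvar z) v) κ') :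
    tsubst (.all z (tsubst X (update ζ q (.tvar z)))) κ =
      tsubst (.all q X) fun v => tsubst (ζ v) κ := by
  have hset : ((ftv (tsubst X (update ζ q (.tvar z))) \ {z}).biUnion fun v => ftv (κ v)) =
      (ftv X \ {q}).biUnion fun v => ftv (tsubst (ζ v) κ) := by
    ext n
    simp only [ftv_tsubst, Finset.mem_biUnion, Finset.mem_sdiff, Finset.mem_singleton]
    constructor
    · rintro ⟨u, ⟨⟨v, hv, hu⟩, huz⟩, hn⟩
      have hvq : v ≠ q := by
        rintro rfl; simp only [update_self, ftv, Finset.mem_singleton] at hu; exact huz hu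
      rw [update_of_ne hvq] at hu
      exact ⟨v, ⟨hv, hvq⟩, u, hu, hn⟩
    · rintro ⟨v, ⟨hv, hvq⟩, u, hu, hn⟩
      refine ⟨u, ⟨⟨v, hv, by rwa [update_of_ne hvq]⟩, ?_⟩, hn⟩
      rintro rfl; exact hz v hv hvq hu
  simp only [tsubst, hset]
  congr 1
  rw [hcomp]
  refine tsubst_congr fun v hv => ?_
  by_cases hvq : v = q
  · subst hvq; simp [tsubst]
  · simp only [update_of_ne hvq]
    refine tsubst_congr fun u hu => ?_
    rw [update_of_ne]
    rintro rfl; exact hz v hv hvq hu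

theorem tsubst_tsubst (ρ : FTy) (ξ ζ : ℕ → FTy) :
    tsubst (tsubst ρ ξ) ζ = tsubst ρ fun v => tsubst (ξ v) ζ := by
  induction ρ generalizing ξ ζ with
  | tvar p => rfl
  | boole | nat => rfl
  | list ρ ih => simp only [tsubst, ih]
  | arr ρ τ ih₁ ih₂ => simp only [tsubst, ih₁, ih₂]
  | all p ρ ih =>
    refine tsubst_all_update_of (fun v hv hvp hz =>
      freshVar_notMem ((ftv ρ \ {p}).biUnion fun q => ftv (ξ q)) ?_) fun κ' => ih _ _
    exact Finset.mem_biUnion.2 ⟨v, by simp [hv, hvp], hz⟩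

theorem tsubst_all_update {X : FTy} {ζ κ : ℕ → FTy} {q z : ℕ}
    (hz : ∀ v ∈ ftv X, v ≠ q → z ∉ ftv (ζ v)) :
    tsubst (.all z (tsubst X (update ζ q (.tvar z)))) κ =
      tsubst (.all q X) fun v => tsubst (ζ v) κ :=
  tsubst_all_update_of hz fun _ => tsubst_tsubst _ _ _

/-- Alpha-equivalence, characterized by equality of all substitution instances: this works
because `tsubst` chooses its bound variables canonically from the free variables of the result. -/
def AlphaEq (X Y : FTy) : Prop := ∀ κ : ℕ → FTy, tsubst X κ = tsubst Y κ

namespace AlphaEq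

variable {X Y Z : FTy}

theorem refl (X : FTy) : AlphaEq X X := fun _ => rfl

theorem symm (h : AlphaEq X Y) : AlphaEq Y X := fun κ => (h κ).symm

theorem trans (h₁ : AlphaEq X Y) (h₂ : AlphaEq Y Z) : AlphaEq X Z := fun κ => (h₁ κ).trans (h₂ κ)

theorem ftv_eq (h : AlphaEq X Y) : ftv X = ftv Y := by
  simpa [ftv_tsubst, ftv] using congrArg ftv (h FTy.tvar)

theorem all_congr (p : ℕ) (h : AlphaEq X Y) : AlphaEq (.all p X) (.all p Y) := by
  intro κ
  simp only [tsubst, h.ftv_eq, h (update κ p _)]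

theorem tsubst_tvar (X : FTy) : AlphaEq (tsubst X FTy.tvar) X := fun κ => by
  rw [tsubst_tsubst]; rfl

theorem tsubst_congr {κ₁ κ₂ : ℕ → FTy} (h : ∀ u ∈ ftv X, AlphaEq (κ₁ u) (κ₂ u)) :
    AlphaEq (tsubst X κ₁) (tsubst X κ₂) := fun κ => by
  rw [tsubst_tsubst, tsubst_tsubst]
  exact SNPaper.tsubst_congr fun u hu => h u hu κ

theorem all_update {ζ : ℕ → FTy} {q z : ℕ} (hz : ∀ v ∈ ftv X, v ≠ q → z ∉ ftv (ζ v)) :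
    AlphaEq (.all z (tsubst X (update ζ q (.tvar z)))) (tsubst (.all q X) ζ) := fun κ => by
  rw [tsubst_all_update hz, tsubst_tsubst]

theorem tsubst1_eq_of_rename {U : FTy} {p z : ℕ} (hz : z ∉ ftv U \ {p}) (σ : FTy) :
    tsubst1 U p σ = tsubst1 (tsubst U (update FTy.tvar p (.tvar z))) z σ := by
  rw [tsubst1, tsubst1, tsubst_tsubst]
  refine SNPaper.tsubst_congr fun v hv => ?_
  by_cases hvp : v = p
  · subst hvp; simp [tsubst]
  · have hvz : v ≠ z := by rintro rfl; exact hz (by simp [hv, hvp])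
    simp [tsubst, hvp, hvz]

theorem tsubst1_eq {p q : ℕ} {U W : FTy} (h : AlphaEq (.all p U) (.all q W)) (σ : FTy) :
    tsubst1 U p σ = tsubst1 W q σ := by
  have hU := freshVar_notMem ((ftv U \ {p}).biUnion fun v => ftv (FTy.tvar v))
  have hW := freshVar_notMem ((ftv W \ {q}).biUnion fun v => ftv (FTy.tvar v))
  obtain ⟨hz, hbody⟩ : _ ∧ _ := by simpa only [tsubst, FTy.all.injEq] using h FTy.tvar
  simp only [ftv, Finset.biUnion_singleton_eq_self] at hU hW hz hbody
  rw [tsubst1_eq_of_rename hU, hbody, hz, ← tsubst1_eq_of_rename hW]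

theorem exists_eq_all {W : FTy} {q : ℕ} (h : AlphaEq X (.all q W)) : ∃ p U, X = .all p U := by
  have h' := h FTy.tvar
  cases X with
  | all p U => exact ⟨p, U, rfl⟩
  | _ => simp [tsubst] at h'

end AlphaEq

def alls (qs : List ℕ) (X : FTy) : FTy := qs.foldr .all X

theorem ftv_alls_subset (qs : List ℕ) (X : FTy) : ftv (alls qs X) ⊆ ftv X := by
  induction qs with
  | nil => exact subset_rfl
  | cons q qs ih => exact Finset.sdiff_subset.trans ih

/-- Later updates win, matching the scoping of repeated binders in `alls`. -/
def updateVars (ζ : ℕ → FTy) : List ℕ → List ℕ → ℕ → FTy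
  | q :: qs, z :: zs => updateVars (update ζ q (.tvar z)) qs zs
  | _, _ => ζ

theorem alphaEq_tsubst_alls : ∀ {qs zs : List ℕ} {ζ : ℕ → FTy} {Y : FTy},
    zs.length = qs.length → zs.Nodup → (∀ z ∈ zs, ∀ v ∈ ftv Y, z ∉ ftv (ζ v)) →
    AlphaEq (tsubst (alls qs Y) ζ) (alls zs (tsubst Y (updateVars ζ qs zs)))
  | [], [], _, _, _, _, _ => AlphaEq.refl _
  | [], _ :: _, _, _, hlen, _, _ | _ :: _, [], _, _, hlen, _, _ => by simp at hlen
  | q :: qs, z :: zs, ζ, Y, hlen, hnd, hfresh => by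
    rw [List.nodup_cons] at hnd
    have hz : ∀ v ∈ ftv (alls qs Y), v ≠ q → z ∉ ftv (ζ v) :=
      fun v hv _ => hfresh z (by simp) v (ftv_alls_subset qs Y hv)
    refine (AlphaEq.all_update hz).symm.trans (AlphaEq.all_congr z ?_)
    refine alphaEq_tsubst_alls (by simpa using hlen) hnd.2 fun z' hz' v hv => ?_
    by_cases hvq : v = q
    · subst hvq
      simp only [update_self, ftv, Finset.mem_singleton]
      rintro rfl; exact hnd.1 hz'
    · rw [update_of_ne hvq]; exact hfresh z' (by simp [hz']) v hv

def hull (Γ : Ctx) : Set ℕ := {p | ∃ x σ, Γ x = some σ ∧ p ∈ ftv σ}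

theorem notMem_hull {Γ : Ctx} {p : ℕ} : p ∉ hull Γ ↔ ∀ x σ, Γ x = some σ → p ∉ ftv σ := by
  simp [hull]

theorem hull_emptyCtx : hull emptyCtx = ∅ := by
  simp [hull, emptyCtx]

theorem hull_extend_finite {Γ : Ctx} (h : (hull Γ).Finite) (x : ℕ) (ρ : FTy) :
    (hull fun y => if y = x then some ρ else Γ y).Finite := by
  refine (h.union (ftv ρ).finite_toSet).subset ?_
  rintro p ⟨y, σ, hy, hp⟩
  by_cases hyx : y = x
  · simp only [hyx, if_true, Option.some.injEq] at hy
    subst hy; exact .inr hp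
  · simp only [hyx, if_false] at hy
    exact .inl ⟨y, σ, hy, hp⟩

/-- Closure under the two typing rules that leave the term unchanged. -/
inductive GC (H : Set ℕ) (S : Set FTy) : FTy → Prop where
  | base {σ : FTy} : σ ∈ S → GC H S σ
  | gen {ρ : FTy} (p : ℕ) : GC H S ρ → p ∉ H → GC H S (.all p ρ)
  | inst {ρ : FTy} (p : ℕ) (σ : FTy) : GC H S (.all p ρ) → GC H S (tsubst1 ρ p σ)

theorem GC.exists_mem {H : Set ℕ} {S : Set FTy} {ρ : FTy} (h : GC H S ρ) : ∃ σ, σ ∈ S := by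
  induction h with
  | base hσ => exact ⟨_, hσ⟩
  | gen _ _ _ ih | inst _ _ _ ih => exact ih

section Typing

variable {C : Type} {Δ : C → FTy} {Γ : Ctx}

/-- Typings whose last rule is syntax-directed. -/
inductive FTydRoot (Δ : C → FTy) (Γ : Ctx) : Tm FCO fArity C → FTy → Prop where
  | var {x : ℕ} {ρ : FTy} : Γ x = some ρ → FTydRoot Δ Γ (.var x) ρ
  | cst (c : C) : FTydRoot Δ Γ (.cst c) (Δ c)
  | lam {x : ℕ} {M : Tm FCO fArity C} {ρ σ : FTy} :
      FTyd Δ (fun y => if y = x then some ρ else Γ y) M σ → FTydRoot Δ Γ (.lam x M) (.arr ρ σ)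
  | app {M N : Tm FCO fArity C} {ρ σ : FTy} :
      FTyd Δ Γ M (.arr ρ σ) → FTyd Δ Γ N ρ → FTydRoot Δ Γ (.app M N) σ
  | tt : FTydRoot Δ Γ (.con .tt ![]) .boole
  | ff : FTydRoot Δ Γ (.con .ff ![]) .boole
  | zero : FTydRoot Δ Γ (.con .zero ![]) .nat
  | succ {M : Tm FCO fArity C} : FTyd Δ Γ M .nat → FTydRoot Δ Γ (.con .succ ![M]) .nat
  | nil {ρ : FTy} : FTydRoot Δ Γ (.con .nil ![]) (.list ρ)
  | cons {M N : Tm FCO fArity C} {ρ : FTy} :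
      FTyd Δ Γ M ρ → FTyd Δ Γ N (.list ρ) → FTydRoot Δ Γ (.con .cons ![M, N]) (.list ρ)

theorem FTyd.gc_root {M : Tm FCO fArity C} {ρ : FTy} (h : FTyd Δ Γ M ρ) :
    GC (hull Γ) {σ | FTydRoot Δ Γ M σ} ρ := by
  induction h with
  | var hx => exact .base (.var hx)
  | cst c => exact .base (.cst c)
  | lam hM => exact .base (.lam hM)
  | app hM hN => exact .base (.app hM hN)
  | allI _ hp ih => exact .gen _ ih (notMem_hull.2 hp)
  | allE σ _ ih => exact .inst _ σ ih
  | tt => exact .base .tt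
  | ff => exact .base .ff
  | zero => exact .base .zero
  | succ hM => exact .base (.succ hM)
  | nil => exact .base .nil
  | cons hM hN => exact .base (.cons hM hN)

theorem FTyd.of_gc {M : Tm FCO fArity C} {S : Set FTy} {ρ : FTy} (h : GC (hull Γ) S ρ)
    (hS : ∀ σ ∈ S, FTyd Δ Γ M σ) : FTyd Δ Γ M ρ := by
  induction h with
  | base hσ => exact hS _ hσ
  | gen p _ hp ih => exact .allI ih (notMem_hull.1 hp)
  | inst p σ _ ih => exact .allE σ ih

end Typing

def arrows (As : List FTy) (B : FTy) : FTy := As.foldr .arr B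

theorem tsubst_arrows_ne_all {B : FTy} (hB : ∀ θ p U, tsubst B θ ≠ .all p U) (As : List FTy)
    (θ : ℕ → FTy) (p : ℕ) (U : FTy) : tsubst (arrows As B) θ ≠ .all p U := by
  cases As with
  | nil => exact hB θ p U
  | cons A As => simp [arrows, tsubst]

def Shape (qs : List ℕ) (X : FTy) (θ : ℕ → FTy) (c : FTy) : Prop :=
  AlphaEq c (alls qs (tsubst X θ)) ∧ (qs = [] → c = tsubst X θ)

namespace Shape

variable {qs : List ℕ} {X c : FTy} {θ : ℕ → FTy}

theorem nil (X : FTy) (θ : ℕ → FTy) : Shape [] X θ (tsubst X θ) := ⟨.refl _, fun _ => rfl⟩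

theorem gen (p : ℕ) (h : Shape qs X θ c) : Shape (p :: qs) X θ (.all p c) :=
  ⟨h.1.all_congr p, nofun⟩

theorem inst {q p : ℕ} {zs : List ℕ} {ψ σ : FTy} (h : Shape (q :: qs) X θ (.all p ψ))
    (hlen : zs.length = qs.length) (hnd : zs.Nodup)
    (hzs : ∀ z ∈ zs, z ∉ ftv σ ∧ z ∉ ftv (tsubst X θ)) :
    Shape zs X (fun v => tsubst (θ v) (updateVars (fun y => if y = q then σ else .tvar y) qs zs))
      (tsubst1 ψ p σ) := by
  have heq : tsubst1 ψ p σ =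
      tsubst (alls qs (tsubst X θ)) fun y => if y = q then σ else .tvar y :=
    h.1.tsubst1_eq σ
  unfold Shape
  rw [heq, ← tsubst_tsubst]
  refine ⟨alphaEq_tsubst_alls hlen hnd fun z hz v hv => ?_, fun hz => ?_⟩
  · by_cases hvq : v = q
    · simpa [hvq] using (hzs z hz).1
    · simp only [hvq, if_false, ftv, Finset.mem_singleton]
      rintro rfl; exact (hzs z hz).2 hv
  · subst hz
    cases qs with
    | nil => rfl
    | cons => simp at hlen

end Shape

section Spine

variable {C : Type} {Δ : C → FTy} {Γ : Ctx}

/-- Invariant for the types of a spine `c M₁ … Mⱼ`: `tr` pairs the arguments with their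
parameter types in the type of `c`, and all of them follow one common instance `θ`. -/
def SpineInv (Δ : C → FTy) (Γ : Ctx) (body : FTy) (tr : List (FTy × Tm FCO fArity C))
    (ρ : FTy) : Prop :=
  ∃ qs θ, Shape qs body θ ρ ∧ ∀ pr ∈ tr, ∃ c, FTyd Δ Γ pr.2 c ∧ Shape qs pr.1 θ c

namespace SpineInv

variable {body : FTy} {tr : List (FTy × Tm FCO fArity C)}

theorem of_typed {θ : ℕ → FTy} (htr : ∀ pr ∈ tr, FTyd Δ Γ pr.2 (tsubst pr.1 θ)) :
    SpineInv Δ Γ body tr (tsubst body θ) :=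
  ⟨[], θ, .nil body θ, fun pr hpr => ⟨_, htr pr hpr, .nil pr.1 θ⟩⟩

theorem of_gc {S : Set FTy} {ρ : FTy} (hbody : ∀ θ p U, tsubst body θ ≠ .all p U)
    (hS : ∀ s ∈ S, SpineInv Δ Γ body tr s) (h : GC (hull Γ) S ρ) : SpineInv Δ Γ body tr ρ := by
  induction h with
  | base hs => exact hS _ hs
  | gen p _ hp ih =>
    obtain ⟨qs, θ, hρ, htr⟩ := ih
    refine ⟨p :: qs, θ, hρ.gen p, fun pr hpr => ?_⟩
    obtain ⟨c, hc, hshape⟩ := htr pr hpr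
    exact ⟨.all p c, .allI hc (notMem_hull.1 hp), hshape.gen p⟩
  | inst p σ _ ih =>
    obtain ⟨qs, θ, hρ, htr⟩ := ih
    cases qs with
    | nil => exact absurd (hρ.2 rfl).symm (hbody θ _ _)
    | cons q qs =>
      -- one list of fresh binder names serves the body and all tracked arguments
      let F := ftv σ ∪ (body :: tr.map Prod.fst).toFinset.biUnion fun X => ftv (tsubst X θ)
      have hzs : ∀ X ∈ body :: tr.map Prod.fst, ∀ z ∈ List.range' (freshVar F) qs.length,
          z ∉ ftv σ ∧ z ∉ ftv (tsubst X θ) := by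
        intro X hX z hz
        have hFz := fun (hmem : z ∈ F) => (lt_freshVar hmem).not_ge (List.mem_range'_1.1 hz).1
        exact ⟨fun hmem => hFz (Finset.mem_union_left _ hmem), fun hmem => hFz
          (Finset.mem_union_right _ (Finset.mem_biUnion.2 ⟨X, List.mem_toFinset.2 hX, hmem⟩))⟩
      refine ⟨_, _, hρ.inst (by simp) List.nodup_range' (hzs body List.mem_cons_self),
        fun pr hpr => ?_⟩
      obtain ⟨c, hc, hshape⟩ := htr pr hpr
      obtain ⟨pc, ψc, rfl⟩ := hshape.1.exists_eq_all
      exact ⟨_, .allE σ hc, hshape.inst (by simp) List.nodup_range'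
        (hzs pr.1 (List.mem_cons_of_mem _ (List.mem_map_of_mem hpr)))⟩

theorem exists_eq_tsubst {ρ : FTy} (h : SpineInv Δ Γ body tr ρ) (hρ : ∀ p U, ρ ≠ .all p U) :
    ∃ θ, ρ = tsubst body θ ∧ ∀ pr ∈ tr, FTyd Δ Γ pr.2 (tsubst pr.1 θ) := by
  obtain ⟨qs, θ, hshape, htr⟩ := h
  obtain rfl : qs = [] := by
    cases qs with
    | nil => rfl
    | cons q qs => obtain ⟨p, U, rfl⟩ := hshape.1.exists_eq_all; exact absurd rfl (hρ p U)
  refine ⟨θ, hshape.2 rfl, fun pr hpr => ?_⟩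
  obtain ⟨c, hc, hcs⟩ := htr pr hpr
  exact hcs.2 rfl ▸ hc

theorem of_cst {c : C} {ps : List ℕ} (hΔ : Δ c = alls ps body)
    (hbody_tvar : tsubst body FTy.tvar = body) (hbody : ∀ θ p U, tsubst body θ ≠ .all p U)
    {τ : FTy} (h : FTyd Δ Γ (.cst c) τ) : SpineInv Δ Γ body [] τ := by
  refine .of_gc hbody (fun s hs => ?_) h.gc_root
  cases hs
  refine ⟨ps, FTy.tvar, ⟨?_, fun hps => ?_⟩, nofun⟩
  · rw [hΔ, hbody_tvar]; exact .refl _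
  · rw [hΔ, hps, hbody_tvar]; rfl

theorem app {M N : Tm FCO fArity C} {A : FTy} (hbody : ∀ θ p U, tsubst body θ ≠ .all p U)
    (hM : ∀ τ, FTyd Δ Γ M τ → SpineInv Δ Γ (.arr A body) tr τ) {τ : FTy}
    (h : FTyd Δ Γ (.app M N) τ) : SpineInv Δ Γ body ((A, N) :: tr) τ := by
  refine .of_gc hbody (fun s hs => ?_) h.gc_root
  cases hs with | app hMs hN => ?_
  obtain ⟨θ, hθ, htr⟩ := (hM _ hMs).exists_eq_tsubst nofun
  simp only [tsubst, FTy.arr.injEq] at hθ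
  obtain ⟨rfl, rfl⟩ := hθ
  exact .of_typed (List.forall_mem_cons.2 ⟨hN, htr⟩)

theorem appList {B : FTy} (hB : ∀ θ p U, tsubst B θ ≠ .all p U) :
    ∀ {Ms : List (Tm FCO fArity C)} {As : List FTy} {h : Tm FCO fArity C}
      {tr : List (FTy × Tm FCO fArity C)}, Ms.length = As.length →
      (∀ τ, FTyd Δ Γ h τ → SpineInv Δ Γ (arrows As B) tr τ) →
      ∀ τ, FTyd Δ Γ (SNPaper.appList h Ms) τ → SpineInv Δ Γ B ((As.zip Ms).reverse ++ tr) τ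
  | [], [], _, _, _, hh => hh
  | [], _ :: _, _, _, hlen, _ | _ :: _, [], _, _, hlen, _ => by simp at hlen
  | M :: Ms, A :: As, h, tr, hlen, hh => fun τ hτ => by
    simpa using appList hB (Ms := Ms) (h := .app h M) (tr := (A, M) :: tr) (by simpa using hlen)
      (fun τ' hτ' => .app (tsubst_arrows_ne_all hB As) hh hτ') τ hτ

end SpineInv

theorem FTyd.cons_inv {f : Fin 2 → Tm FCO fArity C} {T : FTy}
    (h : FTyd Δ Γ (.con .cons f) (.list T)) : FTyd Δ Γ (f 0) T ∧ FTyd Δ Γ (f 1) (.list T) := by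
  have hinv : SpineInv Δ Γ (.list (.tvar 0)) [(.tvar 0, f 0), (.list (.tvar 0), f 1)]
      (.list T) := by
    refine .of_gc (fun _ _ _ => nofun) (fun s hs => ?_) h.gc_root
    cases hs with | cons hM hN => ?_
    exact .of_typed (θ := fun _ => _) (by simpa [tsubst] using ⟨hM, hN⟩)
  obtain ⟨θ, hT, htr⟩ := hinv.exists_eq_tsubst nofun
  simp only [tsubst, FTy.list.injEq] at hT
  subst hT
  simpa [tsubst] using htr

theorem FTyd.succ_inv {f : Fin 1 → Tm FCO fArity C} {ρ : FTy}
    (h : FTyd Δ Γ (.con .succ f) ρ) : FTyd Δ Γ (f 0) .nat := by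
  obtain ⟨σ, hσ⟩ := h.gc_root.exists_mem
  cases hσ with | succ hM => exact hM

end Spine

section Weakening

variable {H H' : Set ℕ} {S : Set FTy}

theorem GC.exists_alphaEq_tsubst {ρ : FTy} (h : GC H S ρ) (hS : ∀ s ∈ S, ↑(ftv s) ⊆ H)
    (hH' : H'.Finite) : ∀ ζ : ℕ → FTy, (∀ u ∈ H, ζ u = .tvar u) →
      ∃ X, GC H' S X ∧ AlphaEq X (tsubst ρ ζ) := by
  induction h with
  | base hs =>
    intro ζ hζ
    refine ⟨_, .base hs, ?_⟩
    rw [tsubst_congr (σ' := FTy.tvar) fun u hu => hζ u (hS _ hs hu)]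
    exact (AlphaEq.tsubst_tvar _).symm
  | @gen ρ p _ hp ih =>
    intro ζ hζ
    obtain ⟨w, hw⟩ := (hH'.union
      ((ftv ρ \ {p}).biUnion fun v => ftv (ζ v)).finite_toSet).exists_notMem
    simp only [Set.mem_union, not_or, Finset.mem_coe] at hw
    obtain ⟨X, hX, hXα⟩ := ih (update ζ p (.tvar w)) fun u hu => by
      rw [update_of_ne (by rintro rfl; exact hp hu)]; exact hζ u hu
    refine ⟨.all w X, .gen w hX hw.1, (hXα.all_congr w).trans
      (AlphaEq.all_update fun v hv hvp hmem => hw.2 ?_)⟩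
    exact Finset.mem_biUnion.2 ⟨v, by simp [hv, hvp], hmem⟩
  | @inst ψ p σ _ ih =>
    intro ζ hζ
    obtain ⟨w, hw⟩ := Infinite.exists_notMem_finset ((ftv ψ \ {p}).biUnion fun v => ftv (ζ v))
    have hfresh : ∀ v ∈ ftv ψ, v ≠ p → w ∉ ftv (ζ v) := fun v hv hvp hmem =>
      hw (Finset.mem_biUnion.2 ⟨v, by simp [hv, hvp], hmem⟩)
    obtain ⟨X, hX, hXα⟩ := ih ζ hζ
    have hXα' := hXα.trans (AlphaEq.all_update hfresh).symm
    obtain ⟨pc, ψc, rfl⟩ := hXα'.exists_eq_all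
    refine ⟨_, .inst pc (tsubst σ ζ) hX, ?_⟩
    rw [hXα'.tsubst1_eq, tsubst1, tsubst1, tsubst_tsubst, tsubst_tsubst]
    refine AlphaEq.tsubst_congr fun v hv => ?_
    by_cases hvp : v = p
    · subst hvp; simpa [tsubst] using .refl _
    · simp only [update_of_ne hvp, hvp, if_false]
      rw [tsubst_congr (σ' := FTy.tvar) fun u hu => ?_]
      · exact AlphaEq.tsubst_tvar _
      · rw [if_neg]; rintro rfl; exact hfresh v hv hvp hu

theorem GC.transfer {ρ : FTy} (h : GC H S ρ) (hS : ∀ s ∈ S, ↑(ftv s) ⊆ H) (hH' : H'.Finite)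
    (hρ : ∀ p U, ρ ≠ .all p U) : GC H' S ρ := by
  cases h with
  | base hs => exact .base hs
  | gen p _ _ => exact absurd rfl (hρ p _)
  | inst p σ hψ =>
    obtain ⟨X, hX, hXα⟩ := hψ.exists_alphaEq_tsubst hS hH' FTy.tvar fun _ _ => rfl
    have hXα' := hXα.trans (AlphaEq.tsubst_tvar _)
    obtain ⟨pc, ψc, rfl⟩ := hXα'.exists_eq_all
    exact hXα'.tsubst1_eq σ ▸ .inst pc σ hX

end Weakening

theorem FTyd.var_weaken {C : Type} {Δ : C → FTy} {Γ Γ' : Ctx} {v : ℕ} {ρ : FTy}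
    (h : FTyd Δ Γ (.var v) ρ) (hρ : ∀ p U, ρ ≠ .all p U) (hv : Γ' v = Γ v)
    (hΓ' : (hull Γ').Finite) : FTyd Δ Γ' (.var v) ρ := by
  refine .of_gc (h.gc_root.transfer (fun s hs => ?_) hΓ' hρ) fun s hs => ?_
  · cases hs with | var hx => exact fun p hp => ⟨v, s, hx, hp⟩
  · cases hs with | var hx => exact .var (hv.trans hx)

section Soundness

variable {C : Type} {Δ : C → FTy}

/-- Contexts with finitely many free type variables leave room for the fresh variables that
weakening needs under the binders of a right-hand side. -/
def RuleSound (Δ : C → FTy) (r : Rule FCO fArity C) : Prop :=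
  ∀ Γ ρ, (hull Γ).Finite → FTyd Δ Γ (lhsTm r) ρ → FTyd Δ Γ r.rhs ρ

theorem FTyd.lamList_of_imp {L R : Tm FCO fArity C}
    (hLR : ∀ Γ ρ, (hull Γ).Finite → FTyd Δ Γ L ρ → FTyd Δ Γ R ρ) :
    ∀ (xs : List ℕ) (Γ : Ctx) (ρ : FTy), (hull Γ).Finite →
      FTyd Δ Γ (lamList xs L) ρ → FTyd Δ Γ (lamList xs R) ρ
  | [] => hLR
  | x :: xs => fun Γ ρ hΓ (h : FTyd Δ Γ (.lam x (lamList xs L)) ρ) =>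
    .of_gc h.gc_root fun σ hσ => by
      cases hσ with
      | lam hM => exact .lam (FTyd.lamList_of_imp hLR xs _ _ (hull_extend_finite hΓ _ _) hM)

theorem FTypeSound.of_ruleSound {R : Set (Rule FCO fArity C)} (h : ∀ r ∈ R, RuleSound Δ r) :
    FTypeSound R Δ :=
  fun r hr xs _ _ ρ _ hL => FTyd.lamList_of_imp (h r hr) xs emptyCtx ρ (by simp [hull_emptyCtx]) hL

/-- The last argument is inverted directly rather than through `SpineInv`, so that the result
type `R` may be a type variable. -/
theorem RuleSound.of_spine {r : Rule FCO fArity C} {ps : List ℕ} {As : List FTy} {A R : FTy}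
    (hΔ : Δ r.head = alls ps (arrows As (.arr A R)))
    (hTy : tsubst (arrows As (.arr A R)) FTy.tvar = arrows As (.arr A R))
    (hlen : r.pats.length = As.length + 1)
    (hrhs : ∀ Γ θ, (hull Γ).Finite →
      List.Forall₂ (fun A M => FTyd Δ Γ M (tsubst A θ)) (As ++ [A]) (r.pats.map Pat.toTm) →
      FTyd Δ Γ r.rhs (tsubst R θ)) : RuleSound Δ r := by
  intro Γ ρ hΓ h
  obtain ⟨Ps, P, hPs⟩ : ∃ Ps P, r.pats = Ps ++ [P] :=
    ⟨_, _, (List.dropLast_append_getLast (List.ne_nil_of_length_eq_add_one hlen)).symm⟩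
  have hL : lhsTm r = .app (appList (.cst r.head) (Ps.map Pat.toTm)) P.toTm := by
    simp [lhsTm, hPs, appList]
  have hlen' : (Ps.map (Pat.toTm (C := C))).length = As.length := by simpa [hPs] using hlen
  have hhead := SpineInv.appList (Γ := Γ) (fun θ p U => by simp [tsubst]) hlen' fun τ hτ =>
    SpineInv.of_cst hΔ hTy (tsubst_arrows_ne_all (fun _ _ _ => by simp [tsubst]) As) hτ
  rw [hL] at h
  refine .of_gc h.gc_root fun σ hσ => ?_
  cases hσ with | app hM hN => ?_
  obtain ⟨θ, hθ, htr⟩ := (hhead _ hM).exists_eq_tsubst nofun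
  simp only [tsubst, FTy.arr.injEq] at hθ
  obtain ⟨rfl, rfl⟩ := hθ
  refine hrhs Γ θ hΓ ?_
  rw [hPs, List.map_append]
  refine List.rel_append (List.forall₂_iff_zip.2 ⟨hlen'.symm, fun hmem => ?_⟩) (.cons hN .nil)
  exact htr _ (by simpa using hmem)

end Soundness

theorem typed_cst_inst {Γ : Ctx} (c : MC) {B : FTy} (hΔ : ΔMBR c = .all 0 B) (σ : FTy) :
    FTyd ΔMBR Γ (.cst c) (tsubst1 B 0 σ) :=
  .allE σ (hΔ ▸ .cst c)

theorem ruleSound_ifT : RuleSound ΔMBR ⟨.cif, [pT, .pvar 0, .pvar 1], .var 0⟩ :=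
  .of_spine (ps := [0]) (As := [.boole, .tvar 0]) (A := .tvar 0) (R := .tvar 0) rfl rfl rfl
    fun _ _ _ (.cons _ (.cons hx _)) => hx

theorem ruleSound_ifF : RuleSound ΔMBR ⟨.cif, [pF, .pvar 0, .pvar 1], .var 1⟩ :=
  .of_spine (ps := [0]) (As := [.boole, .tvar 0]) (A := .tvar 0) (R := .tvar 0) rfl rfl rfl
    fun _ _ _ (.cons _ (.cons _ (.cons hy _))) => hy

theorem ruleSound_ltZero : RuleSound ΔMBR ⟨.clt, [.pvar 0, pZero], tmF⟩ :=
  .of_spine (ps := []) (As := [.nat]) (A := .nat) (R := .boole) rfl rfl rfl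
    fun _ _ _ _ => .ff

theorem ruleSound_zeroLtSucc : RuleSound ΔMBR ⟨.clt, [pZero, pSucc (.pvar 0)], tmT⟩ :=
  .of_spine (ps := []) (As := [.nat]) (A := .nat) (R := .boole) rfl rfl rfl
    fun _ _ _ _ => .tt

theorem ruleSound_succLtSucc : RuleSound ΔMBR
    ⟨.clt, [pSucc (.pvar 0), pSucc (.pvar 1)], app2 (.cst .clt) (.var 0) (.var 1)⟩ :=
  .of_spine (ps := []) (As := [.nat]) (A := .nat) (R := .boole) rfl rfl rfl
    fun _ _ _ (.cons hn (.cons hm _)) => .app (.app (.cst MC.clt) hn.succ_inv) hm.succ_inv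

theorem ruleSound_lhNil : RuleSound ΔMBR ⟨.clh, [pNil], tmZero⟩ :=
  .of_spine (ps := [0]) (As := []) (A := .list (.tvar 0)) (R := .nat) rfl rfl rfl
    fun _ _ _ _ => .zero

theorem ruleSound_lhCons : RuleSound ΔMBR
    ⟨.clh, [pCons (.pvar 0) (.pvar 1)], tmSucc (.app (.cst .clh) (.var 1))⟩ :=
  .of_spine (ps := [0]) (As := []) (A := .list (.tvar 0)) (R := .nat) rfl rfl rfl
    fun _ θ _ (.cons hl _) => .succ (.app (typed_cst_inst .clh rfl (θ 0)) hl.cons_inv.2)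

theorem ruleSound_getZero : RuleSound ΔMBR ⟨.cget, [pCons (.pvar 0) (.pvar 1), pZero], .var 0⟩ :=
  .of_spine (ps := [0]) (As := [.list (.tvar 0)]) (A := .nat) (R := .tvar 0) rfl rfl rfl
    fun _ _ _ (.cons hl _) => hl.cons_inv.1

theorem ruleSound_getSucc : RuleSound ΔMBR
    ⟨.cget, [pCons (.pvar 0) (.pvar 1), pSucc (.pvar 2)], app2 (.cst .cget) (.var 1) (.var 2)⟩ :=
  .of_spine (ps := [0]) (As := [.list (.tvar 0)]) (A := .nat) (R := .tvar 0) rfl rfl rfl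
    fun _ θ _ (.cons hl (.cons hn _)) =>
      .app (.app (typed_cst_inst .cget rfl (θ 0)) hl.cons_inv.2) hn.succ_inv

theorem ruleSound_catNil : RuleSound ΔMBR ⟨.cat, [pNil, .pvar 0], .var 0⟩ :=
  .of_spine (ps := [0]) (As := [.list (.tvar 0)]) (A := .list (.tvar 0)) (R := .list (.tvar 0))
    rfl rfl rfl fun _ _ _ (.cons _ (.cons ht _)) => ht

theorem ruleSound_catCons : RuleSound ΔMBR ⟨.cat, [pCons (.pvar 0) (.pvar 1), .pvar 2],
    tmCons (.var 0) (app2 (.cst .cat) (.var 1) (.var 2))⟩ :=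
  .of_spine (ps := [0]) (As := [.list (.tvar 0)]) (A := .list (.tvar 0)) (R := .list (.tvar 0))
    rfl rfl rfl fun _ θ _ (.cons hl (.cons ht _)) =>
      .cons hl.cons_inv.1 (.app (.app (typed_cst_inst .cat rfl (θ 0)) hl.cons_inv.2) ht)

theorem ruleSound_recZero : RuleSound ΔMBR ⟨.crec, [.pvar 0, .pvar 1, pZero], .var 0⟩ :=
  .of_spine (ps := [0]) (As := [.tvar 0, .arr .nat (.arr (.tvar 0) (.tvar 0))]) (A := .nat)
    (R := .tvar 0) rfl rfl rfl fun _ _ _ (.cons hx _) => hx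

theorem ruleSound_recSucc : RuleSound ΔMBR ⟨.crec, [.pvar 0, .pvar 1, pSucc (.pvar 2)],
    app2 (.var 1) (.var 2) (app3 (.cst .crec) (.var 0) (.var 1) (.var 2))⟩ :=
  .of_spine (ps := [0]) (As := [.tvar 0, .arr .nat (.arr (.tvar 0) (.tvar 0))]) (A := .nat)
    (R := .tvar 0) rfl rfl rfl fun _ θ _ (.cons hx (.cons hf (.cons hn _))) =>
      .app (.app hf hn.succ_inv)
        (.app (.app (.app (typed_cst_inst .crec rfl (θ 0)) hx) hf) hn.succ_inv)

theorem ruleSound_phi : RuleSound ΔMBR ⟨.cphi, [.pvar 0, .pvar 1, .pvar 2],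
    .app (.var 0) (.lam 3 (app2 (app3 (.cst .cpsi) (.var 0) (.var 1) (.var 2))
      (.var 3) (app2 (.cst .clt) (.var 3) (.app (.cst .clh) (.var 2)))))⟩ :=
  .of_spine (ps := [0])
    (As := [.arr (.arr .nat (.tvar 0)) .nat, .arr .nat (.arr (.arr (.tvar 0) .nat) (.tvar 0))])
    (A := .list (.tvar 0)) (R := .nat) rfl rfl rfl
    fun _ θ hΓ (.cons hy (.cons hg (.cons hs _))) => by
      have hΓ' := hull_extend_finite hΓ 3 .nat
      refine .app hy (.lam ?_)
      exact .app (.app (.app (.app (.app (typed_cst_inst .cpsi rfl (θ 0))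
        (hy.var_weaken nofun rfl hΓ')) (hg.var_weaken nofun rfl hΓ'))
          (hs.var_weaken nofun rfl hΓ')) (.var rfl))
        (.app (.app (.cst MC.clt) (.var rfl))
          (.app (typed_cst_inst .clh rfl (θ 0)) (hs.var_weaken nofun rfl hΓ')))

theorem ruleSound_psiT : RuleSound ΔMBR ⟨.cpsi, [.pvar 0, .pvar 1, .pvar 2, .pvar 3, pT],
    app2 (.cst .cget) (.var 2) (.var 3)⟩ :=
  .of_spine (ps := [0]) (As := [.arr (.arr .nat (.tvar 0)) .nat,
      .arr .nat (.arr (.arr (.tvar 0) .nat) (.tvar 0)), .list (.tvar 0), .nat])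
    (A := .boole) (R := .tvar 0) rfl rfl rfl
    fun _ θ _ (.cons _ (.cons _ (.cons hs (.cons hk _)))) =>
      .app (.app (typed_cst_inst .cget rfl (θ 0)) hs) hk

theorem ruleSound_psiF : RuleSound ΔMBR ⟨.cpsi, [.pvar 0, .pvar 1, .pvar 2, .pvar 3, pF],
    app2 (.var 1) (.var 3) (.lam 4 (app3 (.cst .cphi) (.var 0) (.var 1)
      (app2 (.cst .cat) (.var 2) (tmCons (.var 4) tmNil))))⟩ :=
  .of_spine (ps := [0]) (As := [.arr (.arr .nat (.tvar 0)) .nat,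
      .arr .nat (.arr (.arr (.tvar 0) .nat) (.tvar 0)), .list (.tvar 0), .nat])
    (A := .boole) (R := .tvar 0) rfl rfl rfl
    fun _ θ hΓ (.cons hy (.cons hg (.cons hs (.cons hk _)))) => by
      have hΓ' := hull_extend_finite hΓ 4 (θ 0)
      refine .app (.app hg hk) (.lam ?_)
      exact .app (.app (.app (typed_cst_inst .cphi rfl (θ 0)) (hy.var_weaken nofun rfl hΓ'))
        (hg.var_weaken nofun rfl hΓ')) (.app (.app (typed_cst_inst .cat rfl (θ 0))
          (hs.var_weaken nofun rfl hΓ')) (.cons (.var rfl) .nil))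

theorem mbr_ruleSound : ∀ r ∈ MBR, RuleSound ΔMBR r := by
  intro r hr
  simp only [MBR, mbrList, List.mem_cons, List.not_mem_nil, or_false] at hr
  rcases hr with rfl | rfl | rfl | rfl | rfl | rfl | rfl | rfl | rfl | rfl | rfl | rfl | rfl |
    rfl | rfl | rfl
  exacts [ruleSound_ifT, ruleSound_ifF, ruleSound_ltZero, ruleSound_zeroLtSucc,
    ruleSound_succLtSucc, ruleSound_lhNil, ruleSound_lhCons, ruleSound_getZero, ruleSound_getSucc,
    ruleSound_catNil, ruleSound_catCons, ruleSound_recZero, ruleSound_recSucc, ruleSound_phi,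
    ruleSound_psiT, ruleSound_psiF]

/-- The rewrite system MBR is type-sound for extended
system F w.r.t. the type assignment `Δ_MBR`: for every rule `L ↦ R ∈ MBR`
with `FV L = x⃗` and every closed type `ρ`, `Δ ⊢_F λx⃗.L : ρ` implies
`Δ ⊢_F λx⃗.R : ρ`. -/
theorem statement17 : FTypeSound MBR ΔMBR :=
  .of_ruleSound mbr_ruleSound

end SNPaper
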